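/- arXiv:0707.3426 — 2 statements merged into one kernel-verified Lean document; each statement's English description precedes it below -/
import Mathlib

section
/- Let b be a holomorphic map of the open unit disk 𝔻 ⊂ ℂ into itself, let f : 𝔻 → ℂ be such that the kernel (z,w) ↦ (1 − b(z)·conj(b(w)))/(1 − z·conj(w)) − f(z)·conj(f(w)) is positive semidefinite on 𝔻, and suppose the function g = 1/f (i.e. f(z)·g(z) = 1 for all z ∈ 𝔻) is analytic on 𝔻 with |g(z)| ≤ M for all z ∈ 𝔻. Then the kernel (z,w) ↦ M²/(1 − z·conj(w)) − 1/(1 − b(z)·conj(b(w))) is positive semidefinite on 𝔻. (This is the kernel form of the estimate ‖C_b‖ ≤ ‖1/f‖_∞ · ‖f‖_{H(b)} for f ∈ H(b).) -/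
/-!
Write `k` for the Szegő kernel. Expanding `(1 - b(z) conj b(w))⁻¹` as a geometric series and
testing the positivity hypothesis against the vectors `(cᵢ g(xᵢ) b(xᵢ)ᵐ)ᵢ` gives
`k(b z, b w) ≤ g(z) k(z, w) conj g(w)` as kernels. It remains to see that multiplication by `g`
has norm at most `M` on the span of the kernel functions `k(·, x)`. For `g` holomorphic on the
closed disk, the reproducing property of `k` on the unit circle turns this into the integral of
the pointwise inequality `2 Re (g φ conj ψ) ≤ |φ|² + M² |ψ|²`; the general case follows by applying
this to the dilations `g(ρ ·)` and letting `ρ → 1`.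
-/

open Complex Metric ComplexConjugate
open scoped ComplexOrder

noncomputable section

/-- A kernel `K : X → X → ℂ` is positive semidefinite on a set `S`: for all finite
families of points of `S` and scalars, the associated quadratic form is a
nonnegative real number (using the partial order on `ℂ`). -/
def IsPSDKernelOn {X : Type*} (K : X → X → ℂ) (S : Set X) : Prop :=
  ∀ (n : ℕ) (x : Fin n → X), (∀ i, x i ∈ S) → ∀ c : Fin n → ℂ,
    0 ≤ ∑ i, ∑ j, c i * conj (c j) * K (x i) (x j)

open Filter Finset MeasureTheory
open scoped Real Topology

def szego (z w : ℂ) : ℂ := (1 - z * conj w)⁻¹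

def quadForm {X : Type*} (K : X → X → ℂ) {n : ℕ} (x : Fin n → X) (c : Fin n → ℂ) : ℂ :=
  ∑ i, ∑ j, c i * conj (c j) * K (x i) (x j)

def szegoComb {n : ℕ} (x c : Fin n → ℂ) (z : ℂ) : ℂ :=
  ∑ j, conj (c j) * szego z (x j)

lemma quadForm_sub {X : Type*} (K L : X → X → ℂ) {n : ℕ} (x : Fin n → X) (c : Fin n → ℂ) :
    quadForm (fun z w => K z w - L z w) x c = quadForm K x c - quadForm L x c := by
  simp only [quadForm, mul_sub, sum_sub_distrib]

lemma quadForm_const_mul {X : Type*} (a : ℂ) (K : X → X → ℂ) {n : ℕ} (x : Fin n → X)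
    (c : Fin n → ℂ) : quadForm (fun z w => a * K z w) x c = a * quadForm K x c := by
  simp only [quadForm, mul_sum]
  exact sum_congr rfl fun i _ => sum_congr rfl fun j _ => by ring

lemma continuous_quadForm {X : Type*} (K : X → X → ℂ) {n : ℕ} (x : Fin n → X) :
    Continuous (quadForm K x) := by
  unfold quadForm
  fun_prop

lemma norm_mul_conj_lt_one {z w : ℂ} (h : ‖z‖ * ‖w‖ < 1) : ‖z * conj w‖ < 1 := by
  rwa [norm_mul, RCLike.norm_conj]

lemma one_sub_mul_conj_ne_zero {z w : ℂ} (h : ‖z‖ * ‖w‖ < 1) : 1 - z * conj w ≠ 0 :=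
  sub_ne_zero.mpr fun h1 => by simpa [← h1] using norm_mul_conj_lt_one h

lemma conj_szego (z w : ℂ) : conj (szego z w) = szego w z := by
  simp only [szego, map_inv₀, map_sub, map_one, map_mul, conj_conj, mul_comm]

lemma quadForm_szego_comp_le {X : Type*} {K : X → X → ℂ} {b f g : X → ℂ} {n : ℕ}
    {x : Fin n → X} (hb : ∀ i, ‖b (x i)‖ < 1) (hfg : ∀ i, f (x i) * g (x i) = 1)
    (hpos : ∀ d, 0 ≤ quadForm (fun z w => (1 - b z * conj (b w)) * K z w - f z * conj (f w)) x d)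
    (c : Fin n → ℂ) :
    quadForm szego (b ∘ x) c ≤ quadForm K x (fun i => c i * g (x i)) := by
  have hgeom : ∀ i j, HasSum
      (fun m : ℕ => c i * g (x i) * b (x i) ^ m * conj (c j * g (x j) * b (x j) ^ m) *
        ((1 - b (x i) * conj (b (x j))) * K (x i) (x j) - f (x i) * conj (f (x j))))
      (c i * g (x i) * conj (c j * g (x j)) * K (x i) (x j) -
        c i * conj (c j) * szego (b (x i)) (b (x j))) := by
    intro i j
    set q := b (x i) * conj (b (x j))
    have hbij : ‖b (x i)‖ * ‖b (x j)‖ < 1 :=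
      mul_lt_one_of_nonneg_of_lt_one_left (norm_nonneg _) (hb i) (hb j).le
    have hq : ‖q‖ < 1 := norm_mul_conj_lt_one hbij
    have hq1 : 1 - q ≠ 0 := one_sub_mul_conj_ne_zero hbij
    have hfgj : conj (f (x j)) * conj (g (x j)) = 1 := by rw [← map_mul, hfg j, map_one]
    set e := c i * g (x i) * conj (c j * g (x j))
    set A := (1 - q) * K (x i) (x j) - f (x i) * conj (f (x j))
    have hval : e * K (x i) (x j) - c i * conj (c j) * szego (b (x i)) (b (x j)) =
        (1 - q)⁻¹ * (e * A) := by
      have hef : e * (f (x i) * conj (f (x j))) = c i * conj (c j) := by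
        simp only [e, map_mul]
        linear_combination (c i * conj (c j) * (conj (f (x j)) * conj (g (x j)))) * hfg i +
          c i * conj (c j) * hfgj
      rw [szego]
      linear_combination (-(e * K (x i) (x j))) * inv_mul_cancel₀ hq1 + (1 - q)⁻¹ * hef
    rw [hval]
    refine ((hasSum_geometric_of_norm_lt_one hq).mul_right (e * A)).congr_fun fun m => ?_
    simp only [e, q, map_mul, map_pow, mul_pow]
    ring
  rw [← sub_nonneg]
  refine HasSum.nonneg (L := .unconditional ℕ)
    (fun m => hpos fun i => c i * g (x i) * b (x i) ^ m) ?_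
  simp only [quadForm, Function.comp_apply, ← sum_sub_distrib]
  exact hasSum_sum fun i _ => hasSum_sum fun j _ => hgeom i j

lemma continuousOn_szego {ξ : ℂ} (hξ : ‖ξ‖ < 1) : ContinuousOn (szego ξ) (closedBall 0 1) :=
  ((continuous_const.sub (continuous_const.mul continuous_conj)).continuousOn).inv₀ fun _z hz =>
    one_sub_mul_conj_ne_zero <|
      mul_lt_one_of_nonneg_of_lt_one_left (norm_nonneg _) hξ (mem_closedBall_zero_iff.mp hz)

lemma differentiableOn_szego_left {w : ℂ} (hw : ‖w‖ < 1) :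
    DifferentiableOn ℂ (fun z => szego z w) (closedBall 0 1) :=
  ((differentiable_id.mul_const _).const_sub 1).differentiableOn.inv fun _z hz =>
    one_sub_mul_conj_ne_zero <|
      mul_lt_one_of_nonneg_of_lt_one_right (mem_closedBall_zero_iff.mp hz) (norm_nonneg _) hw

lemma continuous_comp_circleMap {F : ℂ → ℂ} (hF : ContinuousOn F (closedBall 0 1)) :
    Continuous fun θ => F (circleMap 0 1 θ) :=
  hF.comp_continuous (continuous_circleMap 0 1) fun θ =>
    sphere_subset_closedBall (circleMap_mem_sphere 0 zero_le_one θ)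

/-- On the unit circle `szego ξ ζ = ζ / (ζ - ξ)`, so this is Cauchy's integral formula. -/
lemma integral_mul_szego_circleMap {F : ℂ → ℂ} (hF : DifferentiableOn ℂ F (closedBall 0 1))
    {ξ : ℂ} (hξ : ξ ∈ ball (0 : ℂ) 1) :
    ∫ θ in 0..2 * π, F (circleMap 0 1 θ) * szego ξ (circleMap 0 1 θ) = 2 * π * F ξ := by
  have hcauchy := hF.circleIntegral_sub_inv_smul hξ
  simp only [circleIntegral, deriv_circleMap, smul_eq_mul] at hcauchy
  have hpt : ∀ θ, circleMap 0 1 θ * I * ((circleMap 0 1 θ - ξ)⁻¹ * F (circleMap 0 1 θ)) =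
      I * (F (circleMap 0 1 θ) * szego ξ (circleMap 0 1 θ)) := by
    intro θ
    set ζ := circleMap 0 1 θ
    have hζ : ‖ζ‖ = 1 := by simp [ζ, norm_circleMap_zero]
    have hζζ : ζ * conj ζ = 1 := by
      rw [mul_conj, normSq_eq_norm_sq, hζ]; norm_num
    have hne : 1 - ξ * conj ζ ≠ 0 :=
      one_sub_mul_conj_ne_zero (by rw [hζ, mul_one]; exact mem_ball_zero_iff.mp hξ)
    have hζ0 : ζ ≠ 0 := norm_ne_zero_iff.mp (by rw [hζ]; exact one_ne_zero)
    have hsub : ζ - ξ = ζ * (1 - ξ * conj ζ) := by linear_combination ξ * hζζ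
    rw [szego, hsub]
    field_simp
  rw [intervalIntegral.integral_congr fun θ _ => hpt θ, intervalIntegral.integral_const_mul]
    at hcauchy
  apply mul_left_cancel₀ I_ne_zero
  rw [hcauchy]
  ring

lemma two_mul_re_mul_conj_le {G φ ψ : ℂ} {M : ℝ} (hG : ‖G‖ ≤ M) :
    2 * (G * φ * conj ψ).re ≤ normSq φ + M ^ 2 * normSq ψ := by
  have h := normSq_nonneg (φ - conj G * ψ)
  have hG2 : normSq G ≤ M ^ 2 := by
    rw [normSq_eq_norm_sq]
    exact pow_le_pow_left₀ (norm_nonneg G) hG 2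
  simp only [normSq_sub, map_mul, conj_conj, normSq_conj] at h
  have := mul_le_mul_of_nonneg_right hG2 (normSq_nonneg ψ)
  have hre : (φ * (G * conj ψ)).re = (G * φ * conj ψ).re := by ring_nf
  linarith

lemma two_mul_re_integral_mul_conj_le {G φ ψ : ℝ → ℂ} {M a b : ℝ} (hab : a ≤ b)
    (hG : Continuous G) (hφ : Continuous φ) (hψ : Continuous ψ) (hGM : ∀ θ, ‖G θ‖ ≤ M) :
    2 * (∫ θ in a..b, G θ * φ θ * conj (ψ θ)).re ≤
      (∫ θ in a..b, normSq (φ θ)) + M ^ 2 * ∫ θ in a..b, normSq (ψ θ) := by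
  have hcont : Continuous fun θ => G θ * φ θ * conj (ψ θ) :=
    (hG.mul hφ).mul (continuous_conj.comp hψ)
  have hφi : IntervalIntegrable (fun θ => normSq (φ θ)) volume a b :=
    (continuous_normSq.comp hφ).intervalIntegrable a b
  have hψi : IntervalIntegrable (fun θ => normSq (ψ θ)) volume a b :=
    (continuous_normSq.comp hψ).intervalIntegrable a b
  have h : ∫ θ in a..b, 2 * (G θ * φ θ * conj (ψ θ)).re ≤
      ∫ θ in a..b, (normSq (φ θ) + M ^ 2 * normSq (ψ θ)) :=
    intervalIntegral.integral_mono_on hab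
      (((continuous_re.comp hcont).intervalIntegrable _ _).const_mul 2)
      (hφi.add (hψi.const_mul _)) fun θ _ => two_mul_re_mul_conj_le (hGM θ)
  have hre := intervalIntegral.intervalIntegral_re (hcont.intervalIntegrable (μ := volume) a b)
  simp only [RCLike.re_to_complex] at hre
  rwa [intervalIntegral.integral_const_mul, hre, intervalIntegral.integral_add hφi
    (hψi.const_mul _), intervalIntegral.integral_const_mul] at h

section SzegoComb

variable {n : ℕ} {x : Fin n → ℂ}

lemma conj_szegoComb (c : Fin n → ℂ) (z : ℂ) :
    conj (szegoComb x c z) = ∑ j, c j * szego (x j) z := by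
  simp only [szegoComb, map_sum, map_mul, conj_conj, conj_szego]

lemma quadForm_szego_eq_sum (c : Fin n → ℂ) :
    quadForm szego x c = ∑ i, c i * szegoComb x c (x i) := by
  simp only [quadForm, szegoComb, mul_sum]
  exact sum_congr rfl fun i _ => sum_congr rfl fun j _ => by ring

variable (hx : ∀ i, x i ∈ ball (0 : ℂ) 1)
include hx

lemma differentiableOn_szegoComb (c : Fin n → ℂ) :
    DifferentiableOn ℂ (szegoComb x c) (closedBall 0 1) :=
  DifferentiableOn.fun_sum fun j _ =>
    (differentiableOn_szego_left (mem_ball_zero_iff.mp (hx j))).const_mul _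

lemma integral_mul_conj_szegoComb {F : ℂ → ℂ} (hF : DifferentiableOn ℂ F (closedBall 0 1))
    (c : Fin n → ℂ) :
    ∫ θ in 0..2 * π, F (circleMap 0 1 θ) * conj (szegoComb x c (circleMap 0 1 θ)) =
      2 * π * ∑ j, c j * F (x j) := by
  have hcont : ∀ j, Continuous fun θ => szego (x j) (circleMap 0 1 θ) := fun j =>
    continuous_comp_circleMap (continuousOn_szego (mem_ball_zero_iff.mp (hx j)))
  simp only [conj_szegoComb, mul_sum]
  rw [intervalIntegral.integral_finsetSum fun j _ =>
    ((continuous_comp_circleMap hF.continuousOn).fun_mul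
      (continuous_const.fun_mul (hcont j))).intervalIntegrable _ _]
  refine sum_congr rfl fun j _ => ?_
  simp only [mul_left_comm _ (c j), intervalIntegral.integral_const_mul,
    integral_mul_szego_circleMap hF (hx j)]

lemma two_pi_mul_quadForm_szego (c : Fin n → ℂ) :
    2 * π * quadForm szego x c =
      ↑(∫ θ in 0..2 * π, normSq (szegoComb x c (circleMap 0 1 θ))) := by
  rw [quadForm_szego_eq_sum, ← integral_mul_conj_szegoComb hx (differentiableOn_szegoComb hx c),
    ← intervalIntegral.integral_ofReal]
  simp only [mul_conj]

lemma quadForm_szego_mul_le_of_closedBall {G : ℂ → ℂ} {M : ℝ}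
    (hG : DifferentiableOn ℂ G (closedBall 0 1)) (hGM : ∀ z ∈ closedBall (0 : ℂ) 1, ‖G z‖ ≤ M)
    (c : Fin n → ℂ) :
    quadForm szego x (fun i => c i * G (x i)) ≤ ((M ^ 2 : ℝ) : ℂ) * quadForm szego x c := by
  set e := fun i => c i * G (x i)
  have hA := two_pi_mul_quadForm_szego hx e
  have hB := two_pi_mul_quadForm_szego hx c
  have hcross : ∫ θ in 0..2 * π, G (circleMap 0 1 θ) * szegoComb x e (circleMap 0 1 θ) *
      conj (szegoComb x c (circleMap 0 1 θ)) = 2 * π * quadForm szego x e := by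
    rw [integral_mul_conj_szegoComb hx (hG.fun_mul (differentiableOn_szegoComb hx e)),
      quadForm_szego_eq_sum]
    simp only [e, mul_assoc]
  have hbound := two_mul_re_integral_mul_conj_le Real.two_pi_pos.le
    (continuous_comp_circleMap hG.continuousOn)
    (continuous_comp_circleMap (differentiableOn_szegoComb hx e).continuousOn)
    (continuous_comp_circleMap (differentiableOn_szegoComb hx c).continuousOn)
    fun θ => hGM _ (sphere_subset_closedBall (circleMap_mem_sphere 0 zero_le_one θ))
  rw [hcross, hA, ofReal_re] at hbound
  have h2π : (0 : ℂ) < 2 * π := by exact_mod_cast Real.two_pi_pos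
  rw [← mul_le_mul_iff_of_pos_left h2π, mul_left_comm, hA, hB, ← ofReal_mul, real_le_real]
  linarith

lemma quadForm_szego_mul_le {g : ℂ → ℂ} {M : ℝ} (hg : DifferentiableOn ℂ g (ball 0 1))
    (hgM : ∀ z ∈ ball (0 : ℂ) 1, ‖g z‖ ≤ M) (c : Fin n → ℂ) :
    quadForm szego x (fun i => c i * g (x i)) ≤ ((M ^ 2 : ℝ) : ℂ) * quadForm szego x c := by
  have hdilate : ∀ ρ ∈ Set.Ioo (0 : ℝ) 1,
      quadForm szego x (fun i => c i * g (ρ * x i)) ≤ ((M ^ 2 : ℝ) : ℂ) * quadForm szego x c := by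
    intro ρ hρ
    have hmaps : Set.MapsTo (fun z : ℂ => ρ * z) (closedBall 0 1) (ball 0 1) := fun z hz => by
      rw [mem_ball_zero_iff, norm_mul, norm_real, Real.norm_of_nonneg hρ.1.le]
      exact mul_lt_one_of_nonneg_of_lt_one_left hρ.1.le hρ.2 (mem_closedBall_zero_iff.mp hz)
    exact quadForm_szego_mul_le_of_closedBall hx
      (hg.comp (differentiableOn_const _ |>.mul differentiableOn_id) hmaps)
      (fun z hz => hgM _ (hmaps hz)) c
  have hlim : Tendsto (fun ρ : ℝ => quadForm szego x (fun i => c i * g (ρ * x i))) (𝓝[<] 1)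
      (𝓝 (quadForm szego x (fun i => c i * g (x i)))) := by
    have hcoef : Tendsto (fun (ρ : ℝ) i => c i * g (ρ * x i)) (𝓝[<] 1)
        (𝓝 fun i => c i * g (x i)) := by
      refine tendsto_pi_nhds.mpr fun i => tendsto_const_nhds.mul ?_
      have hρx : Tendsto (fun ρ : ℝ => (ρ : ℂ) * x i) (𝓝[<] 1) (𝓝 (x i)) := by
        simpa using ((continuous_ofReal.fun_mul continuous_const).tendsto 1).mono_left
          nhdsWithin_le_nhds
      exact (hg.continuousOn.continuousAt (isOpen_ball.mem_nhds (hx i))).tendsto.comp hρx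
    exact ((continuous_quadForm szego x).tendsto _).comp hcoef
  exact le_of_tendsto hlim (eventually_of_mem (Ioo_mem_nhdsLT zero_lt_one) hdilate)

end SzegoComb

theorem composition_norm_bound_via_Hb_function_general
    (b f g : ℂ → ℂ) (M : ℝ)
    (hb_maps : ∀ z ∈ ball (0 : ℂ) 1, b z ∈ ball (0 : ℂ) 1)
    (hpos : IsPSDKernelOn
      (fun z w => (1 - b z * conj (b w)) / (1 - z * conj w) - f z * conj (f w))
      (ball (0 : ℂ) 1))
    (hg_holo : DifferentiableOn ℂ g (ball (0 : ℂ) 1))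
    (hfg : ∀ z ∈ ball (0 : ℂ) 1, f z * g z = 1)
    (hg_bdd : ∀ z ∈ ball (0 : ℂ) 1, ‖g z‖ ≤ M) :
    IsPSDKernelOn
      (fun z w => ((M ^ 2 : ℝ) : ℂ) * (1 - z * conj w)⁻¹ - (1 - b z * conj (b w))⁻¹)
      (ball (0 : ℂ) 1) := by
  intro n x hx c
  have hcomp : quadForm szego (b ∘ x) c ≤ quadForm szego x (fun i => c i * g (x i)) :=
    quadForm_szego_comp_le (K := szego) (fun i => mem_ball_zero_iff.mp (hb_maps _ (hx i)))
      (fun i => hfg _ (hx i)) (hpos n x hx) c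
  have hmul := quadForm_szego_mul_le hx hg_holo hg_bdd c
  change 0 ≤ quadForm (fun z w => ((M ^ 2 : ℝ) : ℂ) * szego z w - szego (b z) (b w)) x c
  rw [quadForm_sub, quadForm_const_mul]
  exact sub_nonneg.mpr (hcomp.trans hmul)

/-- Kernel form of the estimate `‖C_b‖ ≤ ‖1/f‖_∞ · ‖f‖_{H(b)}`: if `f` lies in
the unit ball of `H(b)` and `g = 1/f` is analytic and bounded by `M` on the
disk, then `M²·k(z,w) − k(b(z),b(w))` is positive semidefinite. -/
theorem composition_norm_bound_via_Hb_function
    (b f g : ℂ → ℂ) (M : ℝ)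
    (hb_holo : DifferentiableOn ℂ b (ball (0 : ℂ) 1))
    (hb_maps : ∀ z ∈ ball (0 : ℂ) 1, b z ∈ ball (0 : ℂ) 1)
    (hpos : IsPSDKernelOn
      (fun z w => (1 - b z * conj (b w)) / (1 - z * conj w) - f z * conj (f w))
      (ball (0 : ℂ) 1))
    (hg_holo : DifferentiableOn ℂ g (ball (0 : ℂ) 1))
    (hfg : ∀ z ∈ ball (0 : ℂ) 1, f z * g z = 1)
    (hg_bdd : ∀ z ∈ ball (0 : ℂ) 1, ‖g z‖ ≤ M) :
    IsPSDKernelOn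
      (fun z w => ((M ^ 2 : ℝ) : ℂ) * (1 - z * conj w)⁻¹ - (1 - b z * conj (b w))⁻¹)
      (ball (0 : ℂ) 1) :=
  composition_norm_bound_via_Hb_function_general b f g M hb_maps hpos hg_holo hfg hg_bdd
end
end

section
/- Let n ≥ 1, let b : 𝔹ⁿ → 𝔹ⁿ be a holomorphic map of the open unit ball into itself, and let α ≥ 1 be a real number. If the kernel K^{b,α}(z,w) = ((1 − ⟨b(z), b(w)⟩)/(1 − ⟨z,w⟩))^α (principal branch) is positive semidefinite on 𝔹ⁿ, then the kernel (z,w) ↦ (1 − ⟨b(z), b(w)⟩) · (1 − ⟨z,w⟩)^{−α} is positive semidefinite on 𝔹ⁿ. (This is the first assertion of the ball lemma: each coordinate function b_i is a contractive multiplier of H²_{n,α}; equivalently the tuple of multiplication operators (M_{b_1},…,M_{b_n}) is a row contraction.) -/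
/-!
Write `F(z,w) = ⟨b z, b w⟩` and `G(z,w) = ⟨z, w⟩`. Since `1 - F` and `1 - G` have positive real
part on the ball, `(1 - F) (1 - G)^{-α} = K^{b,α} · (1 - F)^{-(α-1)}`, and
`(1 - F)^{-(α-1)} = exp ((α - 1) ∑ₖ Fᵏ / k)` is a pointwise limit of polynomials in `F` with
nonnegative coefficients, i.e. of finite sums `∑ₜ gₜ(z) conj (gₜ(w))`. Multiplying a positive
semidefinite kernel by such a sum keeps it positive semidefinite (split the quadratic form
along `t`), and positive semidefiniteness survives pointwise limits.
-/

open Complex Metric ComplexConjugate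
open scoped ComplexOrder

noncomputable section

open Filter Topology Finset

def IsGramKernel {X : Type*} (K : X → X → ℂ) : Prop :=
  ∃ (ι : Type) (s : Finset ι) (g : ι → X → ℂ), ∀ z w, K z w = ∑ t ∈ s, g t z * conj (g t w)

namespace IsGramKernel

variable {X : Type*} {K L : X → X → ℂ}

theorem const {c : ℂ} (hc : 0 ≤ c) : IsGramKernel fun _ _ : X => c := by
  refine ⟨Unit, {()}, fun _ _ => (Real.sqrt ‖c‖ : ℂ), fun _ _ => ?_⟩
  rw [sum_singleton, conj_ofReal, ← ofReal_mul, Real.mul_self_sqrt (norm_nonneg c)]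
  exact eq_coe_norm_of_nonneg hc

theorem add (hK : IsGramKernel K) (hL : IsGramKernel L) :
    IsGramKernel fun z w => K z w + L z w := by
  obtain ⟨ι, s, g, hg⟩ := hK
  obtain ⟨κ, u, h, hh⟩ := hL
  refine ⟨ι ⊕ κ, s.disjSum u, Sum.elim g h, fun z w => ?_⟩
  simp [sum_disjSum, hg, hh]

theorem mul (hK : IsGramKernel K) (hL : IsGramKernel L) :
    IsGramKernel fun z w => K z w * L z w := by
  obtain ⟨ι, s, g, hg⟩ := hK
  obtain ⟨κ, u, h, hh⟩ := hL
  refine ⟨ι × κ, s ×ˢ u, fun t z => g t.1 z * h t.2 z, fun z w => ?_⟩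
  show K z w * L z w = _
  rw [hg, hh, sum_mul_sum, sum_product]
  refine sum_congr rfl fun i _ => sum_congr rfl fun j _ => ?_
  rw [map_mul]
  ring

theorem pow (hK : IsGramKernel K) (k : ℕ) : IsGramKernel fun z w => K z w ^ k := by
  induction k with
  | zero => simpa using const (X := X) zero_le_one
  | succ k ih => simpa only [pow_succ] using ih.mul hK

theorem div_const (hK : IsGramKernel K) {c : ℂ} (hc : 0 ≤ c) :
    IsGramKernel fun z w => K z w / c := by
  simpa only [div_eq_mul_inv] using hK.mul (const (inv_nonneg.mpr hc))

theorem sum {ι : Type*} {K : ι → X → X → ℂ} (s : Finset ι) (hK : ∀ i ∈ s, IsGramKernel (K i)) :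
    IsGramKernel fun z w => ∑ i ∈ s, K i z w := by
  classical
  induction s using Finset.induction_on with
  | empty => simpa using const (X := X) le_rfl
  | insert i s hi ih =>
    simp only [sum_insert hi]
    exact (hK i (mem_insert_self i s)).add (ih fun j hj => hK j (mem_insert_of_mem hj))

end IsGramKernel

namespace IsPSDKernelOn

variable {X : Type*} {K L : X → X → ℂ} {S : Set X}

theorem congr (hK : IsPSDKernelOn K S) (h : ∀ z ∈ S, ∀ w ∈ S, K z w = L z w) :
    IsPSDKernelOn L S := by
  intro N x hx c
  refine (hK N x hx c).trans_eq (sum_congr rfl fun i _ => sum_congr rfl fun j _ => ?_)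
  rw [h _ (hx i) _ (hx j)]

theorem mul_gram (hK : IsPSDKernelOn K S) (hL : IsGramKernel L) :
    IsPSDKernelOn (fun z w => K z w * L z w) S := by
  obtain ⟨ι, s, g, hg⟩ := hL
  intro N x hx c
  have hsplit : ∑ i, ∑ j, c i * conj (c j) * (K (x i) (x j) * L (x i) (x j)) =
      ∑ t ∈ s, ∑ i, ∑ j, (c i * g t (x i)) * conj (c j * g t (x j)) * K (x i) (x j) := by
    simp only [hg, mul_sum, map_mul]
    rw [sum_comm (s := s)]
    refine sum_congr rfl fun i _ => ?_
    rw [sum_comm (s := s)]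
    refine sum_congr rfl fun j _ => sum_congr rfl fun t _ => ?_
    ring
  rw [hsplit]
  exact sum_nonneg fun t _ => hK N x hx fun i => c i * g t (x i)

theorem of_tendsto {K : ℕ → X → X → ℂ} (hK : ∀ m, IsPSDKernelOn (K m) S)
    (hlim : ∀ z ∈ S, ∀ w ∈ S, Tendsto (fun m => K m z w) atTop (𝓝 (L z w))) :
    IsPSDKernelOn L S := by
  intro N x hx c
  refine ge_of_tendsto' (?_ : Tendsto _ atTop _) fun m => hK m N x hx c
  exact tendsto_finsetSum _ fun i _ => tendsto_finsetSum _ fun j _ =>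
    (hlim _ (hx i) _ (hx j)).const_mul _

theorem mul_exp {G : ℕ → X → X → ℂ} (hK : IsPSDKernelOn K S) (hG : ∀ m, IsGramKernel (G m))
    (hGL : ∀ z ∈ S, ∀ w ∈ S, Tendsto (fun m => G m z w) atTop (𝓝 (L z w))) :
    IsPSDKernelOn (fun z w => K z w * exp (L z w)) S := by
  have hpartial (p : ℕ) :
      IsPSDKernelOn (fun z w => K z w * ∑ q ∈ range p, L z w ^ q / q.factorial) S := by
    refine of_tendsto (K := fun m z w => K z w * ∑ q ∈ range p, G m z w ^ q / q.factorial)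
      (fun m => hK.mul_gram (IsGramKernel.sum _ fun q _ =>
        ((hG m).pow q).div_const (Nat.cast_nonneg _))) fun z hz w hw => ?_
    exact (tendsto_finsetSum _ fun q _ => ((hGL z hz w hw).pow q).div_const _).const_mul _
  refine of_tendsto hpartial fun z _ w _ => ?_
  rw [exp_eq_exp_ℂ]
  exact (NormedSpace.expSeries_div_hasSum_exp (L z w)).tendsto_sum_nat.const_mul _

theorem mul_one_sub_cpow_neg {G : X → X → ℂ} (hK : IsPSDKernelOn K S) (hG : IsGramKernel G)
    (hG1 : ∀ z ∈ S, ∀ w ∈ S, ‖G z w‖ < 1) {β : ℂ} (hβ : 0 ≤ β) :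
    IsPSDKernelOn (fun z w => K z w * (1 - G z w) ^ (-β)) S := by
  refine (hK.mul_exp (L := fun z w => β * -log (1 - G z w))
    (G := fun m z w => β * ∑ k ∈ range m, G z w ^ k / k)
    (fun m => (IsGramKernel.const hβ).mul (IsGramKernel.sum (range m) fun k _ =>
      (hG.pow k).div_const (Nat.cast_nonneg _)))
    fun z hz w hw => ?_).congr fun z hz w hw => ?_
  · exact (hasSum_taylorSeries_neg_log (hG1 z hz w hw)).tendsto_sum_nat.const_mul β
  · have hne : 1 - G z w ≠ 0 := sub_ne_zero.mpr fun h => by simpa [← h] using hG1 z hz w hw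
    rw [cpow_def_of_ne_zero hne]
    ring_nf

end IsPSDKernelOn

theorem Complex.log_div_of_re_pos {f g : ℂ} (hf : 0 < f.re) (hg : 0 < g.re) :
    log (f / g) = log f - log g := by
  have hf' := abs_lt.mp (abs_arg_lt_pi_div_two_iff.mpr (Or.inl hf))
  have hg' := abs_lt.mp (abs_arg_lt_pi_div_two_iff.mpr (Or.inl hg))
  have hπ := Real.pi_pos
  have hg_arg : g.arg ≠ Real.pi := by linarith [hg'.2]
  have hg0 : g ≠ 0 := fun h => by simp [h] at hg
  have hf0 : f ≠ 0 := fun h => by simp [h] at hf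
  have harg : f.arg + g⁻¹.arg ∈ Set.Ioc (-Real.pi) Real.pi := by
    rw [arg_inv, if_neg hg_arg]
    constructor <;> linarith [hf'.1, hf'.2, hg'.1, hg'.2]
  rw [div_eq_mul_inv, log_mul hf0 (inv_ne_zero hg0) harg, log_inv g hg_arg, sub_eq_add_neg]

theorem Complex.mul_cpow_neg_eq_div_cpow_mul_cpow {f g : ℂ} (hf : 0 < f.re) (hg : 0 < g.re)
    (a : ℂ) : f * g ^ (-a) = (f / g) ^ a * f ^ (1 - a) := by
  have hg0 : g ≠ 0 := fun h => by simp [h] at hg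
  have hf0 : f ≠ 0 := fun h => by simp [h] at hf
  rw [cpow_def_of_ne_zero (div_ne_zero hf0 hg0), cpow_def_of_ne_zero hg0,
    cpow_def_of_ne_zero hf0, log_div_of_re_pos hf hg, ← exp_add]
  conv_lhs => rw [← exp_log hf0, ← exp_add]
  ring_nf

theorem Complex.re_one_sub_pos {u : ℂ} (hu : ‖u‖ < 1) : 0 < (1 - u).re := by
  rw [sub_re, one_re]
  linarith [re_le_norm u]

theorem EuclideanSpace.norm_sum_mul_conj_lt_one {ι : Type*} [Fintype ι]
    {u v : EuclideanSpace ℂ ι} (hu : ‖u‖ < 1) (hv : ‖v‖ < 1) :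
    ‖∑ i, u i * conj (v i)‖ < 1 := by
  have hinner : ∑ i, u i * conj (v i) = inner ℂ v u := by
    simp [PiLp.inner_apply]
  rw [hinner]
  calc ‖inner ℂ v u‖ ≤ ‖v‖ * ‖u‖ := norm_inner_le_norm v u
    _ < 1 := by nlinarith [norm_nonneg u, norm_nonneg v]

theorem ball_coordinates_row_contraction_general
    (n : ℕ)
    (b : EuclideanSpace ℂ (Fin n) → EuclideanSpace ℂ (Fin n))
    (hb_maps : ∀ z ∈ ball (0 : EuclideanSpace ℂ (Fin n)) 1,
      b z ∈ ball (0 : EuclideanSpace ℂ (Fin n)) 1)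
    (α : ℝ) (hα : 1 ≤ α)
    (hpos : IsPSDKernelOn
      (fun z w => ((1 - ∑ i, b z i * conj (b w i)) / (1 - ∑ i, z i * conj (w i))) ^ (α : ℂ))
      (ball (0 : EuclideanSpace ℂ (Fin n)) 1)) :
    IsPSDKernelOn
      (fun z w => (1 - ∑ i, b z i * conj (b w i)) * (1 - ∑ i, z i * conj (w i)) ^ (-(α : ℂ)))
      (ball (0 : EuclideanSpace ℂ (Fin n)) 1) := by
  have hF : IsGramKernel fun z w : EuclideanSpace ℂ (Fin n) => ∑ i, b z i * conj (b w i) :=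
    ⟨Fin n, univ, fun i z => b z i, fun _ _ => rfl⟩
  have hF1 (z) (hz : z ∈ ball 0 1) (w) (hw : w ∈ ball 0 1) : ‖∑ i, b z i * conj (b w i)‖ < 1 :=
    EuclideanSpace.norm_sum_mul_conj_lt_one (mem_ball_zero_iff.mp (hb_maps z hz))
      (mem_ball_zero_iff.mp (hb_maps w hw))
  have hα' : (0 : ℂ) ≤ α - 1 := sub_nonneg.mpr (by exact_mod_cast hα)
  refine (hpos.mul_one_sub_cpow_neg hF hF1 hα').congr fun z hz w hw => ?_
  have hG1 := EuclideanSpace.norm_sum_mul_conj_lt_one (mem_ball_zero_iff.mp hz)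
    (mem_ball_zero_iff.mp hw)
  rw [mul_cpow_neg_eq_div_cpow_mul_cpow (re_one_sub_pos (hF1 z hz w hw)) (re_one_sub_pos hG1),
    neg_sub]

/-- First assertion of the ball lemma: if `K^{b,α}(z,w) = ((1 − ⟨b z, b w⟩)/(1 − ⟨z,w⟩))^α`
is positive semidefinite, then the kernel `(1 − ⟨b z, b w⟩)·(1 − ⟨z,w⟩)^{−α}` is
positive semidefinite (i.e. the tuple `(M_{b_1},…,M_{b_n})` is a row contraction
on `H²_{n,α}`). -/
theorem ball_coordinates_row_contraction
    (n : ℕ) (hn : 1 ≤ n)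
    (b : EuclideanSpace ℂ (Fin n) → EuclideanSpace ℂ (Fin n))
    (hb_holo : DifferentiableOn ℂ b (ball (0 : EuclideanSpace ℂ (Fin n)) 1))
    (hb_maps : ∀ z ∈ ball (0 : EuclideanSpace ℂ (Fin n)) 1,
      b z ∈ ball (0 : EuclideanSpace ℂ (Fin n)) 1)
    (α : ℝ) (hα : 1 ≤ α)
    (hpos : IsPSDKernelOn
      (fun z w => ((1 - ∑ i, b z i * conj (b w i)) / (1 - ∑ i, z i * conj (w i))) ^ (α : ℂ))
      (ball (0 : EuclideanSpace ℂ (Fin n)) 1)) :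
    IsPSDKernelOn
      (fun z w => (1 - ∑ i, b z i * conj (b w i)) * (1 - ∑ i, z i * conj (w i)) ^ (-(α : ℂ)))
      (ball (0 : EuclideanSpace ℂ (Fin n)) 1) :=
  ball_coordinates_row_contraction_general n b hb_maps α hα hpos
end
end
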